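/- The conditional pmf of the Multi-Poisson vector given the sum of independent non-central chi-squared variables: if M_i ∼ Poisson(λ_i/2) independent and Y_i' | M ∼ χ²_{2α_i + 2M_i} independent for i = 1,…,D+1 with Y'⁺ = Σ_i Y_i', then Pr(M = j | Y'⁺ = y) = [₀F₁(α⁺; yλ⁺/4)]^{-1} · (α⁺)_{j⁺}^{-1} · Π_{i=1}^{D+1} (yλ_i/4)^{j_i}/j_i!, where α⁺ = Σα_i, λ⁺ = Σλ_i, j⁺ = Σj_i. -/

import Mathlib

noncomputable def poch (a : ℝ) (n : ℕ) : ℝ := (ascPochhammer ℝ n).eval a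

/-- The generalized hypergeometric function ₀F₁(b;x). -/
noncomputable def F01 (b x : ℝ) : ℝ := ∑' i : ℕ, x ^ i / (poch b i * (i.factorial : ℝ))

/-- The Poisson(μ) probability mass function. -/
noncomputable def poissonPmf (μ : ℝ) (j : ℕ) : ℝ :=
  Real.exp (-μ) * μ ^ j / (j.factorial : ℝ)

/-- The chi-squared density with 2a degrees of freedom, parametrized by a = g/2. -/
noncomputable def chiSqPdf (a y : ℝ) : ℝ :=
  y ^ (a - 1) * Real.exp (-y / 2) / (Real.Gamma a * 2 ^ a)

/-!
Given `M = k`, the joint weight `∏ Poisson(λᵢ/2)(kᵢ) · χ²_{2α⁺+2k⁺}(y)` factors, via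
`Γ(α⁺ + n) = Γ(α⁺) (α⁺)ₙ`, as `e^{-λ⁺/2} χ²_{2α⁺}(y) · (∏ (yλᵢ/4)^{kᵢ}/kᵢ!) / (α⁺)_{k⁺}`.
Summing over `k` grouped by `k⁺ = n`, the multinomial theorem collapses each group to
`(yλ⁺/4)ⁿ / (n! (α⁺)ₙ)`, so the normalising constant is `e^{-λ⁺/2} χ²_{2α⁺}(y) ₀F₁(α⁺; yλ⁺/4)`,
and the common factor cancels in Bayes' quotient.
-/

lemma poch_succ (b : ℝ) (n : ℕ) : poch b (n + 1) = poch b n * (b + n) :=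
  ascPochhammer_succ_eval n b

lemma poch_pos {b : ℝ} (hb : 0 < b) (n : ℕ) : 0 < poch b n :=
  ascPochhammer_pos n b hb

lemma min_le_poch {b : ℝ} (hb : 0 < b) (n : ℕ) : min b 1 ≤ poch b n := by
  induction n with
  | zero => simp [poch]
  | succ n ih =>
    rw [poch_succ]
    rcases n.eq_zero_or_pos with rfl | hn
    · simp [poch]
    · have hbn : 1 ≤ b + n := by
        have : (1 : ℝ) ≤ n := by exact_mod_cast hn
        linarith
      simpa using mul_le_mul ih hbn zero_le_one (poch_pos hb n).le

lemma Real.Gamma_add_nat_eq_mul_poch {b : ℝ} (hb : ∀ n : ℕ, b + n ≠ 0) (n : ℕ) :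
    Real.Gamma (b + n) = Real.Gamma b * poch b n := by
  induction n with
  | zero => simp [poch]
  | succ n ih =>
    rw [Nat.cast_succ, ← add_assoc, Real.Gamma_add_one (hb n), ih, poch_succ]
    ring

lemma summable_F01_series {b : ℝ} (hb : 0 < b) (x : ℝ) :
    Summable fun n : ℕ => x ^ n / (poch b n * n.factorial) := by
  refine .of_norm_bounded ((Real.summable_pow_div_factorial |x|).mul_left (min b 1)⁻¹) fun n => ?_
  rw [norm_div, norm_pow, Real.norm_eq_abs, norm_mul, Real.norm_of_nonneg (poch_pos hb n).le,
    Real.norm_natCast, mul_div_assoc', inv_mul_eq_div, div_div]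
  gcongr
  exact min_le_poch hb n

theorem Finset.sum_piAntidiag_prod_pow_div_factorial {ι K : Type*} [DecidableEq ι] [Field K]
    [CharZero K] (s : Finset ι) (X : ι → K) (n : ℕ) :
    ∑ k ∈ piAntidiag s n, ∏ i ∈ s, X i ^ k i / (k i).factorial =
      (∑ i ∈ s, X i) ^ n / n.factorial := by
  rw [sum_pow_eq_sum_piAntidiag, sum_div]
  refine sum_congr rfl fun k hk => ?_
  have hfac : (n.factorial : K) = (∏ i ∈ s, ((k i).factorial : K)) * Nat.multinomial s k := by
    rw [← (mem_piAntidiag.mp hk).1]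
    exact_mod_cast (Nat.multinomial_spec s k).symm
  have hprod : (∏ i ∈ s, ((k i).factorial : K)) ≠ 0 :=
    prod_ne_zero_iff.mpr fun i _ => Nat.cast_ne_zero.mpr (k i).factorial_ne_zero
  have hmult : (Nat.multinomial s k : K) ≠ 0 := Nat.cast_ne_zero.mpr (Nat.multinomial_pos s k).ne'
  rw [hfac, prod_div_distrib]
  field_simp

theorem hasSum_of_hasSum_fiberwise_of_nonneg {β γ : Type*} {f : β → ℝ} (hf : ∀ b, 0 ≤ f b)
    (g : β → γ) {a : γ → ℝ} (ha : ∀ c, HasSum (fun b : g ⁻¹' {c} => f b) (a c)) {s : ℝ}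
    (hs : HasSum a s) : HasSum f s := by
  have hsummable : Summable f := by
    rw [← (Equiv.sigmaFiberEquiv g).summable_iff]
    refine (summable_sigma_of_nonneg fun _ => hf _).mpr ⟨fun c => (ha c).summable, ?_⟩
    exact hs.summable.congr fun c => ((ha c).tsum_eq).symm
  have hfib := hsummable.hasSum.tsum_fiberwise g
  simp_rw [fun c => (ha c).tsum_eq] at hfib
  exact hs.unique hfib ▸ hsummable.hasSum

theorem hasSum_prod_pow_div_factorial_div_poch {ι : Type*} [Fintype ι] {b : ℝ} (hb : 0 < b)
    {X : ι → ℝ} (hX : ∀ i, 0 ≤ X i) :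
    HasSum (fun k : ι → ℕ => (∏ i, X i ^ k i / (k i).factorial) / poch b (∑ i, k i))
      (F01 b (∑ i, X i)) := by
  classical
  set term := fun k : ι → ℕ => (∏ i, X i ^ k i / (k i).factorial) / poch b (∑ i, k i)
  have hterm_nonneg (k : ι → ℕ) : 0 ≤ term k :=
    div_nonneg (Finset.prod_nonneg fun i _ => by have := hX i; positivity) (poch_pos hb _).le
  refine hasSum_of_hasSum_fiberwise_of_nonneg hterm_nonneg (fun k => ∑ i, k i)
    (fun n => ?_) (summable_F01_series hb _).hasSum
  have hfiber : (fun k : ι → ℕ => ∑ i, k i) ⁻¹' {n} =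
      ↑(Finset.univ.piAntidiag n : Finset (ι → ℕ)) := by
    ext k; simp [Finset.mem_piAntidiag]
  have hfiber_sum : ∑ k ∈ Finset.univ.piAntidiag n, term k =
      (∑ i, X i) ^ n / (poch b n * n.factorial) := by
    have hterm : ∀ k ∈ Finset.univ.piAntidiag n,
        term k = (∏ i, X i ^ k i / (k i).factorial) / poch b n := fun k hk => by
      simp only [term, (Finset.mem_piAntidiag.mp hk).1]
    rw [Finset.sum_congr rfl hterm, ← Finset.sum_div,
      Finset.sum_piAntidiag_prod_pow_div_factorial, div_div, mul_comm]
  rw [hfiber, ← hfiber_sum]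
  exact (Finset.univ.piAntidiag n).hasSum term

lemma chiSqPdf_pos {a y : ℝ} (ha : 0 < a) (hy : 0 < y) : 0 < chiSqPdf a y := by
  unfold chiSqPdf
  have := Real.Gamma_pos_of_pos ha
  positivity

lemma chiSqPdf_add_nat {a y : ℝ} (ha : 0 < a) (hy : 0 < y) (n : ℕ) :
    chiSqPdf (a + n) y = chiSqPdf a y * (y / 2) ^ n / poch a n := by
  unfold chiSqPdf
  rw [add_sub_right_comm, Real.rpow_add hy, Real.rpow_add two_pos, Real.rpow_natCast,
    Real.rpow_natCast, Real.Gamma_add_nat_eq_mul_poch (fun k => by positivity), div_pow]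
  field_simp

lemma prod_poissonPmf {ι : Type*} (s : Finset ι) (μ : ι → ℝ) (k : ι → ℕ) :
    ∏ i ∈ s, poissonPmf (μ i) (k i) =
      Real.exp (-∑ i ∈ s, μ i) * ∏ i ∈ s, μ i ^ k i / (k i).factorial := by
  simp only [poissonPmf, mul_div_assoc, Finset.prod_mul_distrib, ← Real.exp_sum,
    Finset.sum_neg_distrib]

lemma prod_poissonPmf_mul_chiSqPdf {ι : Type*} [Fintype ι] {a y : ℝ} (ha : 0 < a) (hy : 0 < y)
    (lam : ι → ℝ) (k : ι → ℕ) :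
    (∏ i, poissonPmf (lam i / 2) (k i)) * chiSqPdf (a + (∑ i, k i : ℕ)) y =
      Real.exp (-∑ i, lam i / 2) * chiSqPdf a y *
        ((∏ i, (y * lam i / 4) ^ k i / (k i).factorial) / poch a (∑ i, k i)) := by
  have hscale : (y / 2) ^ (∑ i, k i) * ∏ i, (lam i / 2) ^ k i / (k i).factorial =
      ∏ i, (y * lam i / 4) ^ k i / (k i).factorial := by
    rw [← Finset.prod_pow_eq_pow_sum, ← Finset.prod_mul_distrib]
    refine Finset.prod_congr rfl fun i _ => ?_
    rw [← mul_div_assoc, ← mul_pow]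
    ring_nf
  rw [prod_poissonPmf, chiSqPdf_add_nat ha hy, ← hscale]
  ring

theorem multiPoisson_conditional_given_sum (D : ℕ)
    (α lam : Fin (D + 1) → ℝ) (hα : ∀ i, 0 < α i) (hlam : ∀ i, 0 ≤ lam i)
    (y : ℝ) (hy : 0 < y) (j : Fin (D + 1) → ℕ) :
    (∏ i, poissonPmf (lam i / 2) (j i)) * chiSqPdf ((∑ i, α i) + (∑ i, j i)) y /
        (∑' k : Fin (D + 1) → ℕ,
          (∏ i, poissonPmf (lam i / 2) (k i)) * chiSqPdf ((∑ i, α i) + (∑ i, k i)) y) =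
      (F01 (∑ i, α i) (y * (∑ i, lam i) / 4))⁻¹ * (poch (∑ i, α i) (∑ i, j i))⁻¹ *
        ∏ i, (y * lam i / 4) ^ (j i) / ((j i).factorial : ℝ) := by
  have hα_sum : 0 < ∑ i, α i := Finset.sum_pos (fun i _ => hα i) Finset.univ_nonempty
  have hF := hasSum_prod_pow_div_factorial_div_poch (X := fun i => y * lam i / 4) hα_sum
    fun i => by have := hlam i; positivity
  rw [← Finset.sum_div, ← Finset.mul_sum] at hF
  have hC : Real.exp (-∑ i, lam i / 2) * chiSqPdf (∑ i, α i) y ≠ 0 :=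
    (mul_pos (Real.exp_pos _) (chiSqPdf_pos hα_sum hy)).ne'
  simp_rw [prod_poissonPmf_mul_chiSqPdf hα_sum hy lam]
  rw [tsum_mul_left, hF.tsum_eq, mul_div_mul_left _ _ hC]
  ring
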